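/- Let D ⊆ C be a difference set with parameters (n,k,λ) (possibly trivial), and let B_D = Σ_{g∈D} B_g be the adjacency matrix of the graph Δ(D) = (Ω, s_D), where s_D = ∪_{g∈D} s_g. Then B_D² = kq·I + λq·(A_C − I) + (k²(q−1)/n)·(J − A_C). Consequently Δ(D) is a divisible design graph with parameters (n(q+1), kq, λq, k²(q−1)/n, q+1, n), whose classes are the q+1 lines Cα. -/

import Mathlib

open Classical Matrix

namespace Tatra

variable (F : Type) [Field F] [Fintype F] (K : Subgroup Fˣ)

/-- The equivalence relation on nonzero vectors of `F²` identifying `v` with `x • v` for `x ∈ K`. -/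
def ksetoid : Setoid {v : Fin 2 → F // v ≠ 0} where
  r u v := ∃ x : Fˣ, x ∈ K ∧ ((x : F) • u.1 = v.1)
  iseqv := by
    refine ⟨fun u => ⟨1, K.one_mem, by simp⟩, ?_, ?_⟩
    · rintro u v ⟨x, hx, h⟩
      refine ⟨x⁻¹, K.inv_mem hx, ?_⟩
      rw [← h, smul_smul, Units.val_inv_eq_inv_val, inv_mul_cancel₀ x.ne_zero, one_smul]
    · rintro u v w ⟨x, hx, h1⟩ ⟨y, hy, h2⟩
      refine ⟨y * x, K.mul_mem hy hx, ?_⟩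
      rw [Units.val_mul, mul_smul, h1, h2]

/-- The point set `Ω` of the Tatra scheme. -/
abbrev Om := Quotient (ksetoid F K)

/-- The cyclic group `C = Fˣ/K`. -/
abbrev CC := Fˣ ⧸ K

noncomputable instance : Fintype (Om F K) := Fintype.ofFinite _

noncomputable instance : Fintype (CC F K) := @Fintype.ofFinite _ (Quotient.finite _)

/-- The relation `r_g = {(α, β) : β = gα}` on `Ω`. -/
def rrel (g : CC F K) : Set (Om F K × Om F K) :=
  {p | ∃ (u v : {w : Fin 2 → F // w ≠ 0}) (y : Fˣ),
    Quotient.mk (ksetoid F K) u = p.1 ∧ Quotient.mk (ksetoid F K) v = p.2 ∧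
    (QuotientGroup.mk y : CC F K) = g ∧ ((y : F) • u.1 = v.1)}

/-- `det(u,v) = u₁v₂ - u₂v₁`. -/
def dt (u v : {w : Fin 2 → F // w ≠ 0}) : F := u.1 0 * v.1 1 - u.1 1 * v.1 0

/-- The relation `s_g = {(Ku, Kv) : det(u,v) ∈ g}` on `Ω`. -/
def srel (g : CC F K) : Set (Om F K × Om F K) :=
  {p | ∃ (u v : {w : Fin 2 → F // w ≠ 0}) (y : Fˣ),
    Quotient.mk (ksetoid F K) u = p.1 ∧ Quotient.mk (ksetoid F K) v = p.2 ∧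
    (QuotientGroup.mk y : CC F K) = g ∧ (y : F) = dt F u v}

/-- Adjacency matrix `A_g` of `r_g`. -/
noncomputable def Amat (g : CC F K) : Matrix (Om F K) (Om F K) ℤ :=
  Matrix.of fun α β => if (α, β) ∈ rrel F K g then 1 else 0

/-- Adjacency matrix `B_g` of `s_g`. -/
noncomputable def Bmat (g : CC F K) : Matrix (Om F K) (Om F K) ℤ :=
  Matrix.of fun α β => if (α, β) ∈ srel F K g then 1 else 0

/-- The all-ones matrix `J`. -/
noncomputable def Jmat : Matrix (Om F K) (Om F K) ℤ := Matrix.of fun _ _ => 1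

/-- `A_C = Σ_{g ∈ C} A_g`. -/
noncomputable def AC : Matrix (Om F K) (Om F K) ℤ := ∑ g : CC F K, Amat F K g

/-- Sum `A_X = Σ_{g ∈ X} A_g` for `X ⊆ C`. -/
noncomputable def AmatX (X : Set (CC F K)) : Matrix (Om F K) (Om F K) ℤ :=
  ∑ g ∈ (Set.toFinite X).toFinset, Amat F K g

/-- Sum `B_Y = Σ_{g ∈ Y} B_g` for `Y ⊆ C`. -/
noncomputable def BmatX (Y : Set (CC F K)) : Matrix (Om F K) (Om F K) ℤ :=
  ∑ g ∈ (Set.toFinite Y).toFinset, Bmat F K g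

/-- `r_X = ∪_{g ∈ X} r_g`. -/
def rrelX (X : Set (CC F K)) : Set (Om F K × Om F K) := ⋃ g ∈ X, rrel F K g

/-- `s_Y = ∪_{g ∈ Y} s_g`. -/
def srelX (Y : Set (CC F K)) : Set (Om F K × Om F K) := ⋃ g ∈ Y, srel F K g

/-- The line `Cα` through a point `α ∈ Ω`. -/
def line (α : Om F K) : Set (Om F K) := {β | ∃ g : CC F K, (α, β) ∈ rrel F K g}

/-- The image `t^f` of a binary relation `t` under a permutation `f` of `Ω`. -/
def relImage (f : Equiv.Perm (Om F K)) (t : Set (Om F K × Om F K)) : Set (Om F K × Om F K) :=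
  (fun p => (f p.1, f p.2)) '' t

/-- `f` is the permutation `f_{T,σ} : Kv ↦ K(T·v^σ)` of `Ω`. -/
def Implements (T : Matrix (Fin 2) (Fin 2) F) (σ : F ≃+* F) (f : Equiv.Perm (Om F K)) : Prop :=
  ∀ u v : {w : Fin 2 → F // w ≠ 0}, T.mulVec (fun i => σ (u.1 i)) = v.1 →
    f (Quotient.mk (ksetoid F K) u) = Quotient.mk (ksetoid F K) v

end Tatra

/-!
Write `S ⊆ Fˣ` for the union of the cosets in `D`. Then `Ku` and `Kv` are adjacent in `Δ(D)` iff
`det(u, v) ∈ S`, so `m = |K|` times the number of common neighbours of `Ku` and `Kv` is the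
number of `w ∈ F²` with `det(u, w) ∈ S` and `det(w, v) ∈ S`. If `u, v` are independent,
`w ↦ (det(u, w), det(w, v))` is a bijection `F² → F²` and this number is `|S|² = (mk)²`. If
`v = cu`, then `det(w, v) = -c·det(u, w)`; as `qm` is even, `-1 ∈ K`, and the number becomes
`q·|{b ∈ S : cb ∈ S}| = qm·|{g ∈ D : cg ∈ D}|`, which is `qmk` if `c ∈ K` (that is, `Ku = Kv`)
and `qmλ` otherwise. The lines are the fibres of `Ω → ℙ¹(F)`, `Ku ↦ Fu`, so there are `q + 1`
of them, each of size `(q - 1)/m = n`.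
-/

theorem Nat.card_preimage_of_card_fiber {α β : Type*} [Finite α] [Finite β] (f : α → β) {m : ℕ}
    (hf : ∀ b, Nat.card (f ⁻¹' {b}) = m) (t : Set β) :
    Nat.card (f ⁻¹' t) = m * Nat.card t := by
  have := Fintype.ofFinite t
  calc Nat.card (f ⁻¹' t)
      = Nat.card (Σ b : t, f ⁻¹' {(b : β)}) :=
        (Nat.card_congr (Equiv.sigmaSubtypeFiberEquivSubtype f fun _ => Iff.rfl)).symm
    _ = m * Nat.card t := by simp [Nat.card_sigma, hf, mul_comm]

theorem Finset.sum_boole_eq_ite_exists {ι R : Type*} [AddCommMonoidWithOne R] (s : Finset ι)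
    (p : ι → Prop) [DecidablePred p] [Decidable (∃ i ∈ s, p i)]
    (hp : ∀ i j, p i → p j → i = j) :
    (∑ i ∈ s, if p i then (1 : R) else 0) = if ∃ i ∈ s, p i then 1 else 0 := by
  split_ifs with h
  · obtain ⟨i, hi, hpi⟩ := h
    rw [Finset.sum_eq_single_of_mem i hi fun j _ hji => if_neg fun hpj => hji (hp j i hpj hpi),
      if_pos hpi]
  · exact Finset.sum_eq_zero fun i hi => if_neg fun hpi => h ⟨i, hi, hpi⟩

def IsDifferenceSet {G : Type*} [Group G] [DecidableEq G] (D : Finset G) (l : ℕ) : Prop :=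
  ∀ g ≠ 1, ((D ×ˢ D).filter fun x => x.1 * x.2⁻¹ = g).card = l

theorem IsDifferenceSet.card_filter_mul_mem {G : Type*} [Group G] [DecidableEq G]
    {D : Finset G} {l : ℕ} (hD : IsDifferenceSet D l) (h : G) :
    (D.filter fun g => h * g ∈ D).card = if h = 1 then D.card else l := by
  split_ifs with h1
  · simp [h1]
  rw [← hD h h1]
  refine Finset.card_nbij' (fun g => (h * g, g)) Prod.snd ?_ ?_ ?_ ?_
  · intro g hg
    simp_all
  · rintro ⟨a, b⟩ hx
    simp only [Finset.coe_filter, Finset.mem_product, Set.mem_ofPred_eq] at hx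
    simp [← hx.2, hx.1]
  · intro g _
    rfl
  · rintro ⟨a, b⟩ hx
    simp only [Finset.coe_filter, Finset.mem_product, Set.mem_ofPred_eq] at hx
    simp [← hx.2]

theorem FiniteField.neg_one_mem_of_even_card_mul {F : Type*} [Field F] [Fintype F]
    {K : Subgroup Fˣ} (h : Even (Fintype.card F * Nat.card K)) : (-1 : Fˣ) ∈ K := by
  rcases Nat.even_mul.mp h with hF | hK
  · have h2 : ringChar F = 2 := FiniteField.even_card_iff_char_two.mpr (Nat.even_iff.mp hF)
    rw [show (-1 : Fˣ) = 1 from Units.ext (by simpa using neg_one_eq_one_iff.mpr h2)]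
    exact K.one_mem
  · obtain ⟨x, hx⟩ := exists_prime_orderOf_dvd_card' (G := K) 2 hK.two_dvd
    have hx1 : ((x : Fˣ) : F) ≠ 1 := fun h1 => by
      rw [show x = 1 from Subtype.ext (Units.ext h1), orderOf_one] at hx
      omega
    have hsq : ((x : Fˣ) : F) * (x : Fˣ) = 1 := by
      rw [← Units.val_mul, ← Subgroup.coe_mul, ← sq, ← hx, pow_orderOf_eq_one]
      rfl
    have hneg : (x : Fˣ) = -1 := Units.ext ((mul_self_eq_one_iff.mp hsq).resolve_left hx1)
    exact hneg ▸ x.2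

namespace Tatra

section Det2

variable {F : Type*} [Field F]

def det2 (u v : Fin 2 → F) : F := u 0 * v 1 - u 1 * v 0

theorem det2_smul_left (c : F) (u v : Fin 2 → F) : det2 (c • u) v = c * det2 u v := by
  simp only [det2, Pi.smul_apply, smul_eq_mul]
  ring

theorem det2_smul_right (c : F) (u v : Fin 2 → F) : det2 u (c • v) = c * det2 u v := by
  simp only [det2, Pi.smul_apply, smul_eq_mul]
  ring

theorem det2_swap (u v : Fin 2 → F) : det2 v u = -det2 u v := by
  simp only [det2]
  ring

/-- Cramer's rule. -/
theorem det2_smul_eq_add (u v w : Fin 2 → F) :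
    det2 u v • w = det2 w v • u + det2 u w • v := by
  ext i
  fin_cases i <;> simp [det2] <;> ring

theorem exists_det2_ne_zero {u : Fin 2 → F} (hu : u ≠ 0) : ∃ z, det2 u z ≠ 0 := by
  by_contra! h
  refine hu (funext fun i => ?_)
  fin_cases i
  · simpa [det2] using h (Pi.single 1 1)
  · simpa [det2] using h (Pi.single 0 1)

theorem exists_smul_eq_of_det2_eq_zero {u v : Fin 2 → F} (hu : u ≠ 0) (h : det2 u v = 0) :
    ∃ a : F, a • u = v := by
  obtain ⟨z, hz⟩ := exists_det2_ne_zero hu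
  have hv := det2_smul_eq_add u z v
  rw [h, zero_smul, add_zero] at hv
  exact ⟨det2 v z / det2 u z, by rw [div_eq_inv_mul, mul_smul, ← hv, inv_smul_smul₀ hz]⟩

variable [Fintype F]

noncomputable def det2Equiv {u z : Fin 2 → F} (hz : det2 u z ≠ 0) : (Fin 2 → F) ≃ F × F :=
  Equiv.ofBijective (fun w => (det2 u w, det2 w z)) <| by
    refine (Fintype.bijective_iff_injective_and_card _).mpr ⟨fun w w' h => ?_, by simp [sq]⟩
    simp only [Prod.mk.injEq] at h
    apply smul_right_injective _ hz
    simp only [det2_smul_eq_add u z, h.1, h.2]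

theorem card_det2_mem_of_det2_ne_zero {u v : Fin 2 → F} (huv : det2 u v ≠ 0) (S : Set F) :
    Nat.card {w | det2 u w ∈ S ∧ det2 w v ∈ S} = Nat.card S * Nat.card S := by
  rw [← Nat.card_prod]
  exact Nat.card_congr <| ((det2Equiv huv).subtypeEquiv fun _ => Iff.rfl).trans
    Equiv.subtypeProdEquivProd

theorem card_det2_mem_smul {u : Fin 2 → F} (hu : u ≠ 0) (c : F) (S : Set F) :
    Nat.card {w | det2 u w ∈ S ∧ det2 w (c • u) ∈ S}
      = Fintype.card F * Nat.card {b | b ∈ S ∧ -(c * b) ∈ S} := by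
  obtain ⟨z, hz⟩ := exists_det2_ne_zero hu
  have hdet (w : Fin 2 → F) : det2 w (c • u) = -(c * det2 u w) := by
    rw [det2_smul_right, det2_swap]
    ring
  simp only [hdet]
  rw [mul_comm, ← Nat.card_eq_fintype_card, ← Nat.card_prod]
  exact Nat.card_congr <| ((det2Equiv hz).subtypeEquiv fun _ => Iff.rfl).trans
    (Equiv.prodSubtypeFstEquivSubtypeProd (p := (· ∈ {b | b ∈ S ∧ -(c * b) ∈ S})))

end Det2

open scoped LinearAlgebra.Projectivization

variable {F : Type} [Field F] {K : Subgroup Fˣ}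

def cosetUnion (T : Set (CC F K)) : Set F := Units.val '' (QuotientGroup.mk ⁻¹' T)

theorem val_mem_cosetUnion {T : Set (CC F K)} {y : Fˣ} :
    (y : F) ∈ cosetUnion T ↔ (y : CC F K) ∈ T :=
  Units.val_injective.mem_set_image

theorem zero_notMem_cosetUnion (T : Set (CC F K)) : (0 : F) ∉ cosetUnion T := by
  rintro ⟨y, -, hy⟩
  exact y.ne_zero hy

theorem card_cosetUnion (T : Set (CC F K)) :
    Nat.card (cosetUnion T) = Nat.card K * Nat.card T := by
  rw [cosetUnion, Nat.card_image_of_injective Units.val_injective, QuotientGroup.card_preimage_mk]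

theorem cosetUnion_inter_neg_mul (hK : (-1 : Fˣ) ∈ K) (c : Fˣ) (T : Set (CC F K)) :
    {b | b ∈ cosetUnion T ∧ -((c : F) * b) ∈ cosetUnion T}
      = cosetUnion {g | g ∈ T ∧ (c : CC F K) * g ∈ T} := by
  have hneg : ((-c : Fˣ) : CC F K) = c := by
    rw [← mul_neg_one, QuotientGroup.mk_mul_of_mem c hK]
  ext b
  constructor
  · rintro ⟨⟨y, hy, rfl⟩, hcy⟩
    refine ⟨y, ⟨hy, ?_⟩, rfl⟩
    rwa [← Units.val_mul, ← Units.val_neg, val_mem_cosetUnion, ← neg_mul, QuotientGroup.mk_mul,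
      hneg] at hcy
  · rintro ⟨y, ⟨hy, hcy⟩, rfl⟩
    refine ⟨val_mem_cosetUnion.mpr hy, ?_⟩
    rwa [← Units.val_mul, ← Units.val_neg, val_mem_cosetUnion, ← neg_mul, QuotientGroup.mk_mul,
      hneg]

theorem card_setOf_exists_smul_eq (S : Subgroup Fˣ) (u : {w : Fin 2 → F // w ≠ 0}) :
    Nat.card {w : {w : Fin 2 → F // w ≠ 0} | ∃ x ∈ S, (x : F) • u.1 = w.1} = Nat.card S := by
  let f : S → {w : Fin 2 → F // w ≠ 0} :=
    fun x => ⟨((x : Fˣ) : F) • u.1, smul_ne_zero x.1.ne_zero u.2⟩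
  have hf : Function.Injective f := fun x y h =>
    Subtype.ext (Units.ext (smul_left_injective F u.2 (congrArg Subtype.val h)))
  have hrange : {w : {w : Fin 2 → F // w ≠ 0} | ∃ x ∈ S, (x : F) • u.1 = w.1} = Set.range f := by
    ext w
    simp only [Set.mem_ofPred_eq, Set.mem_range, Subtype.ext_iff, f]
    exact ⟨fun ⟨x, hx, h⟩ => ⟨⟨x, hx⟩, h⟩, fun ⟨x, h⟩ => ⟨x, x.2, h⟩⟩
  rw [hrange, Nat.card_range_of_injective hf]

section Points

variable {u v : {w : Fin 2 → F // w ≠ 0}}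

theorem mk_eq_mk_iff :
    Quotient.mk (ksetoid F K) u = Quotient.mk (ksetoid F K) v ↔ ∃ x ∈ K, (x : F) • u.1 = v.1 :=
  Quotient.eq

theorem mk_eq_mk_iff_of_smul {c : Fˣ} (hc : (c : F) • u.1 = v.1) :
    Quotient.mk (ksetoid F K) u = Quotient.mk (ksetoid F K) v ↔ (c : CC F K) = 1 := by
  rw [mk_eq_mk_iff, QuotientGroup.eq_one_iff]
  constructor
  · rintro ⟨x, hx, hxv⟩
    rwa [Units.ext (smul_left_injective F u.2 (hxv.trans hc.symm))] at hx
  · exact fun h => ⟨c, h, hc⟩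

theorem mk_mem_rrel_iff {g : CC F K} :
    (Quotient.mk (ksetoid F K) u, Quotient.mk (ksetoid F K) v) ∈ rrel F K g ↔
      ∃ y : Fˣ, (y : F) • u.1 = v.1 ∧ (y : CC F K) = g := by
  refine ⟨fun ⟨u', v', y, hu, hv, hg, hy⟩ => ?_, fun ⟨y, hy, hg⟩ => ⟨u, v, y, rfl, rfl, hg, hy⟩⟩
  obtain ⟨x, hx, hxu⟩ := mk_eq_mk_iff.mp hu
  obtain ⟨x', hx', hxv⟩ := mk_eq_mk_iff.mp hv
  refine ⟨x' * y * x⁻¹, ?_, ?_⟩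
  · rw [← hxu, ← hxv, ← hy, smul_smul, smul_smul]
    congr 1
    push_cast
    field_simp
  · rw [mul_comm x' y, mul_assoc, QuotientGroup.mk_mul_of_mem y (K.mul_mem hx' (K.inv_mem hx)), hg]

theorem mk_mem_srel_iff {g : CC F K} :
    (Quotient.mk (ksetoid F K) u, Quotient.mk (ksetoid F K) v) ∈ srel F K g ↔
      ∃ y : Fˣ, (y : F) = det2 u.1 v.1 ∧ (y : CC F K) = g := by
  refine ⟨fun ⟨u', v', y, hu, hv, hg, hy⟩ => ?_, fun ⟨y, hy, hg⟩ => ⟨u, v, y, rfl, rfl, hg, hy⟩⟩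
  obtain ⟨x, hx, hxu⟩ := mk_eq_mk_iff.mp hu
  obtain ⟨x', hx', hxv⟩ := mk_eq_mk_iff.mp hv
  refine ⟨x * x' * y, ?_, ?_⟩
  · rw [← hxu, ← hxv, det2_smul_left, det2_smul_right,
      ← show (y : F) = det2 u'.1 v'.1 from hy]
    push_cast
    ring
  · rw [mul_comm (x * x') y, QuotientGroup.mk_mul_of_mem y (K.mul_mem hx hx'), hg]

theorem mk_mem_srelX_iff {T : Set (CC F K)} :
    (Quotient.mk (ksetoid F K) u, Quotient.mk (ksetoid F K) v) ∈ srelX F K T ↔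
      det2 u.1 v.1 ∈ cosetUnion T := by
  simp only [srelX, Set.mem_iUnion, mk_mem_srel_iff, exists_prop]
  constructor
  · rintro ⟨_, hg, y, hy, rfl⟩
    exact ⟨y, hg, hy⟩
  · rintro ⟨y, hy, h⟩
    exact ⟨_, hy, y, h, rfl⟩

end Points

theorem eq_of_mem_rrel {p : Om F K × Om F K} {g g' : CC F K} (h : p ∈ rrel F K g)
    (h' : p ∈ rrel F K g') : g = g' := by
  obtain ⟨u, v, y, hu, hv, rfl, hy⟩ := h
  rw [← Prod.mk.eta (p := p), ← hu, ← hv] at h'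
  obtain ⟨y', hy', rfl⟩ := mk_mem_rrel_iff.mp h'
  rw [Units.ext (smul_left_injective F u.2 (hy.trans hy'.symm))]

theorem eq_of_mem_srel {p : Om F K × Om F K} {g g' : CC F K} (h : p ∈ srel F K g)
    (h' : p ∈ srel F K g') : g = g' := by
  obtain ⟨u, v, y, hu, hv, rfl, hy⟩ := h
  rw [← Prod.mk.eta (p := p), ← hu, ← hv] at h'
  obtain ⟨y', hy', rfl⟩ := mk_mem_srel_iff.mp h'
  rw [Units.ext (hy.trans hy'.symm)]

def toProj : Om F K → ℙ F (Fin 2 → F) :=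
  Quotient.lift (fun u => Projectivization.mk F u.1 u.2) fun _ _ ⟨x, _, h⟩ =>
    ((Projectivization.mk_eq_mk_iff F _ _ _ _).mpr ⟨x, h⟩).symm

theorem toProj_mk_eq_iff {u v : {w : Fin 2 → F // w ≠ 0}} :
    toProj (Quotient.mk (ksetoid F K) v) = toProj (Quotient.mk (ksetoid F K) u) ↔
      ∃ c : Fˣ, (c : F) • u.1 = v.1 :=
  Projectivization.mk_eq_mk_iff F _ _ _ _

theorem toProj_surjective : Function.Surjective (toProj (F := F) (K := K)) :=
  fun P => ⟨Quotient.mk _ ⟨P.rep, P.rep_nonzero⟩, P.mk_rep⟩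

theorem line_eq_preimage (α : Om F K) : line F K α = toProj ⁻¹' {toProj α} := by
  ext β
  induction α, β using Quotient.inductionOn₂ with | h u v => ?_
  simp only [line, Set.mem_ofPred_eq, mk_mem_rrel_iff, Set.mem_preimage, Set.mem_singleton_iff,
    toProj_mk_eq_iff]
  exact ⟨fun ⟨_, y, hy, _⟩ => ⟨y, hy⟩, fun ⟨y, hy⟩ => ⟨_, y, hy, rfl⟩⟩

theorem line_eq_line_iff {α β : Om F K} : line F K α = line F K β ↔ toProj α = toProj β := by
  rw [line_eq_preimage, line_eq_preimage, (Set.preimage_injective.mpr toProj_surjective).eq_iff,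
    Set.singleton_eq_singleton_iff]

theorem sum_Bmat_apply (T : Finset (CC F K)) (α β : Om F K) :
    (∑ g ∈ T, Bmat F K g) α β = if (α, β) ∈ srelX F K T then 1 else 0 := by
  simp only [Matrix.sum_apply, Bmat, Matrix.of_apply]
  rw [Finset.sum_boole_eq_ite_exists _ _ fun _ _ => eq_of_mem_srel]
  simp [srelX]

variable [Fintype F]

theorem AC_apply (α β : Om F K) : AC F K α β = if line F K α = line F K β then 1 else 0 := by
  simp only [AC, Matrix.sum_apply, Amat, Matrix.of_apply]
  rw [Finset.sum_boole_eq_ite_exists _ _ fun _ _ => eq_of_mem_rrel]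
  refine if_congr ?_ rfl rfl
  rw [line_eq_line_iff, eq_comm, ← Set.mem_singleton_iff, ← Set.mem_preimage, ← line_eq_preimage]
  simp [line]

theorem ncard_range_line : (Set.range (line F K)).ncard = Fintype.card F + 1 := by
  have hrange : Set.range (line F K) = (fun P => toProj ⁻¹' {P}) '' Set.univ := by
    rw [← toProj_surjective.range_eq, ← Set.range_comp]
    exact congrArg Set.range (funext line_eq_preimage)
  rw [hrange, Set.ncard_image_of_injective _ fun P Q h =>
      Set.singleton_injective (Set.preimage_injective.mpr toProj_surjective h),
    Set.ncard_univ, Projectivization.card_of_finrank_two F _ (Module.finrank_fin_fun F),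
    Nat.card_eq_fintype_card]

theorem card_mk_preimage (t : Set (Om F K)) :
    Nat.card (Quotient.mk (ksetoid F K) ⁻¹' t) = Nat.card K * Nat.card t := by
  refine Nat.card_preimage_of_card_fiber _ (fun γ => ?_) t
  induction γ using Quotient.inductionOn with | h u => ?_
  convert card_setOf_exists_smul_eq K u using 3
  ext w
  simp [eq_comm (a := Quotient.mk _ w), mk_eq_mk_iff]

theorem ncard_line (α : Om F K) : (line F K α).ncard = K.index := by
  apply Nat.eq_of_mul_eq_mul_left (Nat.card_pos (α := K))
  rw [Subgroup.card_mul_index, ← Nat.card_coe_set_eq, ← card_mk_preimage]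
  induction α using Quotient.inductionOn with | h u => ?_
  convert (card_setOf_exists_smul_eq ⊤ u).trans Subgroup.card_top using 3
  ext w
  simp [line_eq_preimage, toProj_mk_eq_iff]

theorem mul_self_sum_Bmat_apply (T : Finset (CC F K)) (α β : Om F K) :
    ((∑ g ∈ T, Bmat F K g) * (∑ g ∈ T, Bmat F K g)) α β
      = Nat.card {γ | (α, γ) ∈ srelX F K T ∧ (γ, β) ∈ srelX F K T} := by
  simp only [Matrix.mul_apply, sum_Bmat_apply, ite_zero_mul_ite_zero, one_mul,
    Finset.sum_boole, Nat.card_eq_card_toFinset, Set.toFinset_ofPred]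

theorem card_mul_card_common_srelX (T : Set (CC F K)) (u v : {w : Fin 2 → F // w ≠ 0}) :
    Nat.card K * Nat.card {γ | (Quotient.mk (ksetoid F K) u, γ) ∈ srelX F K T ∧
        (γ, Quotient.mk (ksetoid F K) v) ∈ srelX F K T}
      = Nat.card {w | det2 u.1 w ∈ cosetUnion T ∧ det2 w v.1 ∈ cosetUnion T} := by
  rw [← card_mk_preimage, ← Nat.card_image_of_injective Subtype.val_injective]
  congr! 2
  ext w
  simp only [Set.mem_image, Set.mem_preimage, Set.mem_ofPred_eq, mk_mem_srelX_iff]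
  refine ⟨fun ⟨x, hx, hxw⟩ => hxw ▸ hx, fun h => ⟨⟨w, ?_⟩, h, rfl⟩⟩
  rintro rfl
  exact zero_notMem_cosetUnion T (by simpa [det2] using h.1)

theorem card_common_srelX_of_line_ne (T : Set (CC F K)) {α β : Om F K}
    (h : line F K α ≠ line F K β) :
    Nat.card {γ | (α, γ) ∈ srelX F K T ∧ (γ, β) ∈ srelX F K T} = Nat.card K * Nat.card T ^ 2 := by
  induction α, β using Quotient.inductionOn₂ with | h u v => ?_
  have huv : det2 u.1 v.1 ≠ 0 := fun h0 => h <| line_eq_line_iff.mpr <|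
    ((Projectivization.mk_eq_mk_iff' F _ _ v.2 u.2).mpr
      (exists_smul_eq_of_det2_eq_zero u.2 h0)).symm
  apply Nat.eq_of_mul_eq_mul_left (Nat.card_pos (α := K))
  rw [card_mul_card_common_srelX, card_det2_mem_of_det2_ne_zero huv, card_cosetUnion]
  ring

theorem card_common_srelX_of_smul (hK : (-1 : Fˣ) ∈ K) (T : Set (CC F K))
    {u v : {w : Fin 2 → F // w ≠ 0}} {c : Fˣ} (hc : (c : F) • u.1 = v.1) :
    Nat.card {γ | (Quotient.mk (ksetoid F K) u, γ) ∈ srelX F K T ∧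
        (γ, Quotient.mk (ksetoid F K) v) ∈ srelX F K T}
      = Fintype.card F * Nat.card {g | g ∈ T ∧ (c : CC F K) * g ∈ T} := by
  apply Nat.eq_of_mul_eq_mul_left (Nat.card_pos (α := K))
  rw [card_mul_card_common_srelX, ← hc, card_det2_mem_smul u.2, cosetUnion_inter_neg_mul hK,
    card_cosetUnion]
  ring

theorem mul_self_sum_Bmat_apply_of_isDifferenceSet (hK : (-1 : Fˣ) ∈ K) {D : Finset (CC F K)}
    {l : ℕ} (hD : IsDifferenceSet D l) (α β : Om F K) :
    ((∑ g ∈ D, Bmat F K g) * (∑ g ∈ D, Bmat F K g)) α β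
      = if line F K α = line F K β then
          (if α = β then (Fintype.card F * D.card : ℤ) else Fintype.card F * l)
        else Nat.card K * D.card ^ 2 := by
  induction α, β using Quotient.inductionOn₂ with | h u v => ?_
  rw [mul_self_sum_Bmat_apply]
  by_cases hl : line F K (Quotient.mk _ u) = line F K (Quotient.mk _ v)
  · obtain ⟨c, hc⟩ := toProj_mk_eq_iff.mp (line_eq_line_iff.mp hl).symm
    have hfilter : {g | g ∈ (D : Set (CC F K)) ∧ (c : CC F K) * g ∈ (D : Set (CC F K))}
        = ↑(D.filter fun g => (c : CC F K) * g ∈ D) := by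
      ext
      simp
    rw [if_pos hl, card_common_srelX_of_smul hK _ hc, hfilter, Nat.card_coe_set_eq,
      Set.ncard_coe_finset, hD.card_filter_mul_mem]
    simp only [mk_eq_mk_iff_of_smul hc]
    split_ifs <;> push_cast <;> rfl
  · rw [if_neg hl, card_common_srelX_of_line_ne _ hl]
    simp

end Tatra

open Tatra in
theorem stmt_19_general (F : Type) [Field F] [Fintype F] (K : Subgroup Fˣ) (q n : ℕ)
    (hq : Fintype.card F = q) (hn : K.index = n)
    (heven : Even (q * ((q - 1) / n)))
    (k l : ℕ) (D : Finset (CC F K)) (hk : D.card = k)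
    (hDS : ∀ g : CC F K, g ≠ 1 →
      ((D ×ˢ D).filter (fun x : CC F K × CC F K => x.1 * x.2⁻¹ = g)).card = l) :
    (∑ g ∈ D, Bmat F K g) * (∑ g ∈ D, Bmat F K g)
      = ((k * q : ℕ) : ℤ) • (1 : Matrix (Om F K) (Om F K) ℤ)
        + ((l * q : ℕ) : ℤ) • (AC F K - 1)
        + ((k ^ 2 * ((q - 1) / n) : ℕ) : ℤ) • (Jmat F K - AC F K) ∧
    (∀ α β : Om F K, AC F K α β = if line F K α = line F K β then 1 else 0) ∧
    (Set.range (line F K)).ncard = q + 1 ∧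
    (∀ α : Om F K, (line F K α).ncard = n) := by
  have hmn : Nat.card K * n = q - 1 := by
    rw [← hn, Subgroup.card_mul_index, Nat.card_eq_fintype_card, Fintype.card_units, hq]
  have hm : (q - 1) / n = Nat.card K := by
    rw [← hmn, Nat.mul_div_cancel _ (hn ▸ Nat.pos_of_ne_zero K.index_ne_zero_of_finite)]
  have hK : (-1 : Fˣ) ∈ K := FiniteField.neg_one_mem_of_even_card_mul (by rwa [hq, ← hm])
  refine ⟨?_, AC_apply, by rw [ncard_range_line, hq], fun α => (ncard_line α).trans hn⟩
  ext α β
  rw [mul_self_sum_Bmat_apply_of_isDifferenceSet hK hDS, hk, hq, hm]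
  simp only [Matrix.add_apply, Matrix.smul_apply, Matrix.sub_apply, Matrix.one_apply, Jmat,
    Matrix.of_apply, AC_apply, smul_eq_mul]
  split_ifs with hl hαβ hαβ
  · push_cast; ring
  · push_cast; ring
  · exact absurd (congrArg (line F K) hαβ) hl
  · push_cast; ring

open Tatra in
/-- if `D ⊆ C` is a difference set with parameters `(n,k,λ)`, then
`B_D² = kq·I + λq·(A_C − I) + (k²(q−1)/n)·(J − A_C)`; consequently `Δ(D)` is a divisible
design graph with parameters `(n(q+1), kq, λq, k²(q−1)/n, q+1, n)` whose classes are
the `q+1` lines `Cα`, each of size `n`. -/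
theorem stmt_19 (F : Type) [Field F] [Fintype F] (K : Subgroup Fˣ) (q n : ℕ)
    (hq : Fintype.card F = q) (hn : K.index = n) (hnd : n ∣ q - 1)
    (heven : Even (q * ((q - 1) / n)))
    (k l : ℕ) (D : Finset (CC F K)) (hk : D.card = k)
    (hDS : ∀ g : CC F K, g ≠ 1 →
      ((D ×ˢ D).filter (fun x : CC F K × CC F K => x.1 * x.2⁻¹ = g)).card = l) :
    (∑ g ∈ D, Bmat F K g) * (∑ g ∈ D, Bmat F K g)
      = ((k * q : ℕ) : ℤ) • (1 : Matrix (Om F K) (Om F K) ℤ)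
        + ((l * q : ℕ) : ℤ) • (AC F K - 1)
        + ((k ^ 2 * ((q - 1) / n) : ℕ) : ℤ) • (Jmat F K - AC F K) ∧
    (∀ α β : Om F K, AC F K α β = if line F K α = line F K β then 1 else 0) ∧
    (Set.range (line F K)).ncard = q + 1 ∧
    (∀ α : Om F K, (line F K α).ncard = n) :=
  stmt_19_general F K q n hq hn heven k l D hk hDS
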